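/- The function f(x) = x·⌈log₂ x⌉ - 2^⌈log₂ x⌉ + 1 is continuous on the positive reals, despite involving the discontinuous ceiling function. -/

import Mathlib

/-!
With `L = log₂ x` and `r = fract (-L) ∈ [0, 1)` we have `⌈L⌉ = L + r` and `2 ^ ⌈L⌉ = x * 2 ^ r`, so
`x * ⌈L⌉ - 2 ^ ⌈L⌉ + 1 = x * (L + φ r) + 1` with `φ t = t - 2 ^ t`.
The jumps of `r` at powers of `2` are harmless because `φ 0 = φ 1 = -1`.
-/

open Real Int Set

theorem Int.ceil_eq_add_fract_neg {α : Type*} [Ring α] [LinearOrder α] [IsStrictOrderedRing α]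
    [FloorRing α] (a : α) : (⌈a⌉ : α) = a + fract (-a) := by
  rw [fract, floor_neg, cast_neg, sub_neg_eq_add, add_neg_cancel_left]

theorem continuous_fract_sub_two_rpow_fract :
    Continuous fun t : ℝ => fract t - (2 : ℝ) ^ fract t := by
  have hφ : Continuous fun t : ℝ => t - (2 : ℝ) ^ t :=
    continuous_id.sub (continuous_const.rpow continuous_id fun _ => Or.inl two_ne_zero)
  exact hφ.continuousOn.comp_fract'' (by norm_num)

theorem two_rpow_ceil_logb {x : ℝ} (hx : 0 < x) :
    (2 : ℝ) ^ (⌈logb 2 x⌉ : ℝ) = x * (2 : ℝ) ^ fract (-logb 2 x) := by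
  rw [Int.ceil_eq_add_fract_neg, rpow_add two_pos, rpow_logb two_pos (by norm_num) hx]

theorem W_continuous :
    ContinuousOn
      (fun x : ℝ =>
        x * (⌈Real.logb 2 x⌉ : ℝ) - (2 : ℝ) ^ ((⌈Real.logb 2 x⌉ : ℝ)) + 1)
      (Set.Ioi (0 : ℝ)) := by
  have hlogb : ContinuousOn (logb 2) (Ioi 0) :=
    continuousOn_logb.mono fun x hx => ne_of_gt hx
  have hsmooth : ContinuousOn (fun x : ℝ =>
      x * (logb 2 x + (fract (-logb 2 x) - (2 : ℝ) ^ fract (-logb 2 x))) + 1) (Ioi 0) :=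
    (continuousOn_id.mul (hlogb.add
      (continuous_fract_sub_two_rpow_fract.comp_continuousOn hlogb.neg))).add continuousOn_const
  refine hsmooth.congr fun x hx => ?_
  rw [two_rpow_ceil_logb hx, Int.ceil_eq_add_fract_neg]
  ring
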